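/- arXiv:2604.16055 — 2 statements merged into one kernel-verified Lean document; each statement's English description precedes it below -/
import Mathlib

section
/- Let A and B be finite types, r : ℕ, π : Fin r → B a surjective block assignment, and ā : A → (B → ℚ) a reduced incidence matrix. Define a : A → (Fin r → ℚ) by a α k = ā α (π k) (the incidence matrix is constant on each block), and let ι : (A → ℚ) →ₗ[ℚ] (Fin r → ℚ) be the linear map ι x = ∑_α (x α) • a α. If the family of distinct columns, i.e. the family of vectors (fun α => ā α β : A → ℚ) indexed by β : B, is linearly independent, then the range of ι equals the block-constant subspace {c : Fin r → ℚ | ∀ k l, π k = π l → c k = c l}. (Lemma 'Image equals block-constant subspace'.) -/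
open Matrix

/-- **Image equals block-constant subspace.** If the incidence matrix is
constant on each block and its distinct columns (indexed by blocks) are
linearly independent, then the range of the incidence map equals the
block-constant subspace. -/
theorem stmt14 {A B : Type*} [Fintype A] [Fintype B] {r : ℕ}
    (π : Fin r → B) (hπ : Function.Surjective π)
    (abar : A → (B → ℚ)) (a : A → (Fin r → ℚ))
    (ha : ∀ α k, a α k = abar α (π k))
    (ι : (A → ℚ) →ₗ[ℚ] (Fin r → ℚ))
    (hι : ∀ x, ι x = ∑ α, x α • a α)
    (hcols : LinearIndependent ℚ (fun β : B => (fun α => abar α β : A → ℚ))) :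
    (LinearMap.range ι : Set (Fin r → ℚ)) =
      {c : Fin r → ℚ | ∀ k l, π k = π l → c k = c l} := by
  classical
  ext c
  constructor
  · rintro ⟨x, rfl⟩ k l hkl
    simp only [hι, Finset.sum_apply, Pi.smul_apply, smul_eq_mul, ha, hkl]
  · intro hc
    -- the matrix whose rows are the distinct columns
    set N : Matrix B A ℚ := fun β α => abar α β with hN
    have hrank : N.rank = Fintype.card B := hcols.rank_matrix
    have htop : LinearMap.range (N.mulVecLin) = ⊤ := by
      apply Submodule.eq_top_of_finrank_eq
      rw [show Module.finrank ℚ (LinearMap.range N.mulVecLin) = N.rank from rfl, hrank,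
        Module.finrank_pi]
    -- the block-wise values of c
    have hf : ∀ β, ∃ k, π k = β := hπ
    choose sec hsec using hf
    obtain ⟨x, hx⟩ : ∃ x : A → ℚ, N.mulVecLin x = fun β => c (sec β) := by
      have : (fun β => c (sec β)) ∈ LinearMap.range (N.mulVecLin) := by
        rw [htop]; trivial
      exact this
    refine ⟨x, ?_⟩
    funext k
    have h1 : (N.mulVecLin x) (π k) = c (sec (π k)) := by rw [hx]
    have h2 : c (sec (π k)) = c k := hc _ _ (hsec (π k))
    rw [hι]
    calc (∑ α, x α • a α) k = ∑ α, x α * abar α (π k) := by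
          simp [ha]
      _ = (N.mulVecLin x) (π k) := by
          simp only [Matrix.mulVecLin_apply, Matrix.mulVec, dotProduct,
            hN]
          exact Finset.sum_congr rfl fun α _ => mul_comm _ _
      _ = c k := by rw [h1, h2]
end

section
/- Let n : ℕ and let λ be a multiset of positive natural numbers with sum n. The number of set partitions (Finpartitions) of the n-element set Fin n whose multiset of block cardinalities equals λ is n! / ((∏_{parts s of λ} s!) · (∏_{distinct sizes s} (count of s in λ)!)). (Proposition 'Multiplicity of a fixed block profile'.) -/
/-!
Enumerate `λ` as `c : Fin k → ℕ`. Every bijection `e : (Σ i, Fin (c i)) ≃ Fin n` cuts `Fin n`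
into the blocks `e({i} × Fin (c i))`, a partition of profile `λ`, and every partition `P` of
profile `λ` arises from exactly `(∏ i, c i!) * ∏ s, m_s!` bijections: one first matches the
indices `i` with the blocks of `P` so that sizes agree (`∏ s, m_s!` ways), then maps each
`{i} × Fin (c i)` onto its block (`∏ i, c i!` ways). Both counts are instances of one fact: the
bijections `e` with `g ∘ e = f` between two labelled finite sets with equal fibre sizes form a
torsor under the stabilizer of `f`, whose order is the product of the factorials of the fibre
sizes. Hence `n! = #{P} * (∏ i, c i!) * ∏ s, m_s!`.
-/

open Finset Function
open scoped Nat

section LabelPreservingEquiv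

variable {α β ι : Type*}

theorem card_fiber_eq_of_comp_eq {f : α → ι} {g : β → ι} (e : α ≃ β) (he : g ∘ e = f) (i : ι) :
    Nat.card {a // f a = i} = Nat.card {b // g b = i} :=
  Nat.card_congr (e.subtypeEquiv fun a => by rw [← he, comp_apply])

theorem card_equiv_comp_eq [Fintype α] [DecidableEq α] [Finite β] [DecidableEq ι]
    {f : α → ι} {g : β → ι} (hfg : ∀ i, Nat.card {a // f a = i} = Nat.card {b // g b = i})
    {s : Finset ι} (hs : ∀ a, f a ∈ s) :
    Nat.card {e : α ≃ β // g ∘ e = f} = ∏ i ∈ s, (Nat.card {a // f a = i})! := by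
  set e₀ : α ≃ β := Equiv.ofFiberEquiv fun i => (Finite.card_eq.1 (hfg i)).some
  have he₀ : ∀ a, g (e₀ a) = f a := Equiv.ofFiberEquiv_map _
  have hstab : {e : α ≃ β // g ∘ e = f} ≃ {σ : Equiv.Perm α // f ∘ σ = f} :=
    Equiv.subtypeEquiv ((Equiv.refl α).equivCongr e₀.symm) fun e => by
      have : f ∘ e₀.symm ∘ e = g ∘ e := funext fun a => by simp [← he₀]
      simp [Equiv.equivCongr, this]
  rw [Nat.card_congr hstab, Nat.card_eq_fintype_card, DomMulAct.stabilizer_card']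
  simp only [← Nat.card_eq_fintype_card]
  refine prod_subset (fun i hi => ?_) fun i _ hi => ?_
  · obtain ⟨a, -, rfl⟩ := mem_image.1 hi
    exact hs a
  · have : IsEmpty {a // f a = i} := ⟨fun ⟨a, ha⟩ => hi (ha ▸ mem_image_of_mem f (mem_univ a))⟩
    simp

theorem Multiset.count_map_univ [Fintype α] [DecidableEq ι] (f : α → ι) (i : ι) :
    (univ.val.map f).count i = Nat.card {a // f a = i} := by
  rw [Nat.card_eq_fintype_card, Fintype.card_subtype, Multiset.count_map, card_def]
  simp [eq_comm]

theorem Function.Surjective.exists_equiv_comp_eq_iff {γ : Type*} {f : α → β} {g : α → γ}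
    (hf : Surjective f) (hg : Surjective g) :
    (∃ e : β ≃ γ, e ∘ f = g) ↔ ∀ a b, f a = f b ↔ g a = g b := by
  constructor
  · rintro ⟨e, rfl⟩ a b
    exact e.apply_eq_iff_eq.symm
  · intro h
    refine ⟨(Setoid.quotientKerEquivOfSurjective f hf).symm.trans
      ((Quotient.congrRight h).trans (Setoid.quotientKerEquivOfSurjective g hg)),
      funext fun a => ?_⟩
    have hq : Setoid.quotientKerEquivOfSurjective f hf (Quotient.mk _ a) = f a := rfl
    rw [comp_apply, Equiv.trans_apply, ← hq, Equiv.symm_apply_apply]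
    rfl

end LabelPreservingEquiv

namespace Finpartition

theorem map_card_parts {α : Type*} [DecidableEq α] {s : Finset α} (P : Finpartition s) :
    P.parts.val.map card = univ.val.map fun p : P.parts => #p.1 := by
  rw [univ_eq_attach, attach_val]
  exact (Multiset.attach_map_val' _ _).symm

variable {α : Type*} [Fintype α] [DecidableEq α] (P : Finpartition (univ : Finset α))

def partOf (a : α) : P.parts := ⟨P.part a, P.part_mem.2 (mem_univ a)⟩

theorem partOf_surjective : Surjective P.partOf := fun ⟨_, hp⟩ =>
  let ⟨a, ha⟩ := P.nonempty_of_mem_parts hp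
  ⟨a, Subtype.ext (P.part_eq_of_mem hp ha)⟩

theorem card_partOf_fiber (p : P.parts) : Nat.card {a // P.partOf a = p} = #p.1 := by
  rw [← Nat.card_eq_finsetCard]
  exact Nat.card_congr (Equiv.subtypeEquivRight fun a =>
    Subtype.ext_iff.trans (P.part_eq_iff_mem p.2))

theorem card_comp_partOf_fiber {ι : Type*} (b : P.parts ≃ ι) (i : ι) :
    Nat.card {a // (b ∘ P.partOf) a = i} = #(b.symm i).1 := by
  rw [← P.card_partOf_fiber]
  exact Nat.card_congr (Equiv.subtypeEquivRight fun a => b.eq_symm_apply.symm)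

theorem partOf_eq_partOf_iff {a b : α} : P.partOf a = P.partOf b ↔ b ∈ P.part a :=
  Subtype.ext_iff.trans <|
    eq_comm.trans (P.mem_part_iff_part_eq_part (mem_univ b) (mem_univ a)).symm

theorem mem_parts_iff_exists_part_eq {t : Finset α} : t ∈ P.parts ↔ ∃ a, P.part a = t :=
  ⟨fun ht => (P.part_surjOn ht).imp fun _ => And.right,
    fun ⟨a, ha⟩ => ha ▸ P.part_mem.2 (mem_univ a)⟩

theorem ext_of_mem_part {P Q : Finpartition (univ : Finset α)}
    (h : ∀ a b, b ∈ P.part a ↔ b ∈ Q.part a) : P = Q := by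
  have hpart : P.part = Q.part := funext fun a => Finset.ext (h a)
  ext t
  rw [mem_parts_iff_exists_part_eq, mem_parts_iff_exists_part_eq, hpart]

theorem ofSetoid_ker_eq_iff {ι : Type*} [DecidableEq ι] {f : α → ι} :
    ofSetoid (Setoid.ker f) = P ↔ ∀ a b, P.partOf a = P.partOf b ↔ f a = f b := by
  simp only [partOf_eq_partOf_iff]
  constructor
  · rintro rfl a b
    exact mem_part_ofSetoid_iff_rel
  · intro h
    exact ext_of_mem_part fun a b => mem_part_ofSetoid_iff_rel.trans (h a b).symm

end Finpartition

section BlockPartition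

variable {ι α : Type*} [Fintype α] [DecidableEq α] {c : ι → ℕ}

theorem card_sigma_fin_fiber (i : ι) : Nat.card {t : Σ i, Fin (c i) // t.1 = i} = c i := by
  rw [Nat.card_congr (Equiv.sigmaSubtype i), Nat.card_eq_fintype_card, Fintype.card_fin]

theorem map_card_parts_eq_of_comp_eq_card [Fintype ι] {P : Finpartition (univ : Finset α)}
    {b : P.parts ≃ ι} (hb : c ∘ b = fun p => #p.1) :
    P.parts.val.map card = univ.val.map c := by
  rw [P.map_card_parts, ← hb, ← Multiset.map_map, Multiset.map_univ_val_equiv]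

theorem comp_eq_card_of_comp_partOf_comp_eq {P : Finpartition (univ : Finset α)}
    {b : P.parts ≃ ι} {e : (Σ i, Fin (c i)) ≃ α} (h : (b ∘ P.partOf) ∘ e = Sigma.fst) :
    c ∘ b = fun p => #p.1 := by
  funext p
  have := card_fiber_eq_of_comp_eq e h (b p)
  rwa [card_sigma_fin_fiber, P.card_comp_partOf_fiber, b.symm_apply_apply] at this

theorem card_equiv_parts_comp_eq_card [Fintype ι] (P : Finpartition (univ : Finset α))
    (hP : P.parts.val.map card = univ.val.map c) :
    Nat.card {b : P.parts ≃ ι // c ∘ b = fun p => #p.1} =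
      ∏ s ∈ (univ.val.map c).toFinset, ((univ.val.map c).count s)! := by
  have hcount : ∀ s, Nat.card {p : P.parts // #p.1 = s} = (univ.val.map c).count s :=
    fun s => by rw [← Multiset.count_map_univ, ← P.map_card_parts, hP]
  have hfg : ∀ s, Nat.card {p : P.parts // #p.1 = s} = Nat.card {i // c i = s} :=
    fun s => by rw [hcount, Multiset.count_map_univ]
  have hs : ∀ p : P.parts, #p.1 ∈ (univ.val.map c).toFinset := fun p => by
    rw [← hP, Multiset.mem_toFinset, P.map_card_parts]
    exact Multiset.mem_map_of_mem _ (mem_univ_val p)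
  rw [card_equiv_comp_eq hfg hs]
  exact prod_congr rfl fun s _ => by rw [hcount]

variable [DecidableEq ι]

variable (c) in
/-- The partition of `α` into the blocks `e ({i} × Fin (c i))`. -/
def blockPartition (e : (Σ i, Fin (c i)) ≃ α) : Finpartition (univ : Finset α) :=
  Finpartition.ofSetoid (Setoid.ker (Sigma.fst ∘ e.symm))

theorem blockPartition_eq_iff (hc : ∀ i, 0 < c i) (e : (Σ i, Fin (c i)) ≃ α)
    (P : Finpartition (univ : Finset α)) :
    blockPartition c e = P ↔ ∃ b : P.parts ≃ ι, (b ∘ P.partOf) ∘ e = Sigma.fst := by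
  have hfst : Surjective (Sigma.fst : (Σ i, Fin (c i)) → ι) :=
    Sigma.fst_surjective_iff.2 fun i => ⟨⟨0, hc i⟩⟩
  rw [blockPartition, P.ofSetoid_ker_eq_iff,
    ← P.partOf_surjective.exists_equiv_comp_eq_iff (hfst.comp e.symm.surjective)]
  exact exists_congr fun b => Equiv.eq_comp_symm e _ _

theorem map_card_parts_blockPartition [Fintype ι] (hc : ∀ i, 0 < c i)
    (e : (Σ i, Fin (c i)) ≃ α) : (blockPartition c e).parts.val.map card = univ.val.map c :=
  let ⟨_, hb⟩ := (blockPartition_eq_iff hc e _).1 rfl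
  map_card_parts_eq_of_comp_eq_card (comp_eq_card_of_comp_partOf_comp_eq hb)

variable [Fintype ι]

theorem card_blockPartition_eq (hc : ∀ i, 0 < c i) (P : Finpartition (univ : Finset α)) :
    Nat.card {e // blockPartition c e = P} =
      Nat.card {b : P.parts ≃ ι // c ∘ b = fun p => #p.1} * ∏ i, (c i)! := by
  let Φ : (Σ b : {b : P.parts ≃ ι // c ∘ b = fun p => #p.1},
      {e : (Σ i, Fin (c i)) ≃ α // (b.1 ∘ P.partOf) ∘ e = Sigma.fst}) →
      {e // blockPartition c e = P} :=
    fun x => ⟨x.2.1, (blockPartition_eq_iff hc _ P).2 ⟨x.1.1, x.2.2⟩⟩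
  have hΦ : Bijective Φ := by
    constructor
    · rintro ⟨⟨b, hb⟩, ⟨e, he⟩⟩ ⟨⟨b', hb'⟩, ⟨e', he'⟩⟩ h
      obtain rfl : e = e' := congrArg Subtype.val h
      obtain rfl : b = b' := Equiv.coe_fn_injective <|
        (P.partOf_surjective.comp e.surjective).injective_comp_right (he.trans he'.symm)
      rfl
    · rintro ⟨e, he⟩
      obtain ⟨b, hb⟩ := (blockPartition_eq_iff hc e P).1 he
      exact ⟨⟨⟨b, comp_eq_card_of_comp_partOf_comp_eq hb⟩, ⟨e, hb⟩⟩, rfl⟩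
  have hfiber : ∀ b : {b : P.parts ≃ ι // c ∘ b = fun p => #p.1},
      Nat.card {e : (Σ i, Fin (c i)) ≃ α // (b.1 ∘ P.partOf) ∘ e = Sigma.fst} =
        ∏ i, (c i)! := by
    rintro ⟨b, hb⟩
    have hfg : ∀ i, Nat.card {t : Σ i, Fin (c i) // t.1 = i} =
        Nat.card {a // (b ∘ P.partOf) a = i} := fun i => by
      rw [card_sigma_fin_fiber, P.card_comp_partOf_fiber, ← congrFun hb, comp_apply,
        b.apply_symm_apply]
    simp only [card_equiv_comp_eq hfg (s := univ) fun _ => mem_univ _, card_sigma_fin_fiber]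
  rw [← Nat.card_congr (Equiv.ofBijective Φ hΦ), Nat.card_sigma,
    sum_congr rfl fun b _ => hfiber b, sum_const, card_univ, smul_eq_mul,
    Nat.card_eq_fintype_card]

theorem card_finpartition_map_card_parts_eq_mul (hc : ∀ i, 0 < c i)
    (hsum : ∑ i, c i = Fintype.card α) :
    Nat.card {P : Finpartition (univ : Finset α) // P.parts.val.map card = univ.val.map c} *
        ((∏ i, (c i)!) * ∏ s ∈ (univ.val.map c).toFinset, ((univ.val.map c).count s)!) =
      (Fintype.card α)! := by
  have hfiber : ∀ P : {P : Finpartition (univ : Finset α) //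
      P.parts.val.map card = univ.val.map c}, Nat.card {e // blockPartition c e = P.1} =
        (∏ i, (c i)!) * ∏ s ∈ (univ.val.map c).toFinset, ((univ.val.map c).count s)! :=
    fun P => by rw [card_blockPartition_eq hc, card_equiv_parts_comp_eq_card P.1 P.2, mul_comm]
  have e₀ : (Σ i, Fin (c i)) ≃ α := Fintype.equivOfCardEq (by simp [hsum])
  rw [← Fintype.card_congr e₀, ← Fintype.card_equiv e₀, ← Nat.card_eq_fintype_card,
    ← Nat.card_congr (Equiv.sigmaSubtypeFiberEquiv (blockPartition c)
      (fun P => P.parts.val.map card = univ.val.map c) (map_card_parts_blockPartition hc)),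
    Nat.card_sigma, sum_congr rfl fun P _ => hfiber P, sum_const, card_univ, smul_eq_mul,
    Nat.card_eq_fintype_card]

end BlockPartition

/-- **Multiplicity of a fixed block profile.** The number of set partitions of
an `n`-element set whose multiset of block cardinalities equals `lam` is
`n! / ((∏ over parts s of lam, s!) * (∏ over distinct sizes s, m_s!))`,
where `m_s` is the multiplicity of the part `s` in `lam`. -/
theorem stmt18 {n : ℕ} (lam : Multiset ℕ)
    (hpos : ∀ s ∈ lam, 0 < s) (hsum : lam.sum = n) :
    Nat.card {P : Finpartition (Finset.univ : Finset (Fin n)) //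
        P.parts.val.map Finset.card = lam} =
      n.factorial /
        ((lam.map Nat.factorial).prod *
          lam.toFinset.prod fun s => (lam.count s).factorial) := by
  obtain ⟨k, c, rfl⟩ : ∃ k, ∃ c : Fin k → ℕ, univ.val.map c = lam :=
    ⟨_, lam.toList.get, by rw [Fin.univ_val_map, List.ofFn_get, Multiset.coe_toList]⟩
  have hc : ∀ i, 0 < c i := fun i => hpos _ (Multiset.mem_map_of_mem c (mem_univ_val i))
  have hcard := card_finpartition_map_card_parts_eq_mul (α := Fin n) hc
    (by rw [Fintype.card_fin, ← hsum]; rfl)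
  rw [Fintype.card_fin] at hcard
  rw [Multiset.map_map, prod_map_val, ← hcard]
  exact (Nat.mul_div_cancel _ (by positivity)).symm
end
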